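/- Let Ω be a proper open convex subset of a real normed vector space V. Then the function x ↦ −log(dist(x, V \ Ω)) is convex on Ω. -/

import Mathlib

/-!
If the balls `B(x, d x)` and `B(y, d y)` lie in the convex set `Ω`, so does
`B(a x + b y, a d x + b d y)`: hence `d = dist(·, V \ Ω)` is concave on `Ω`. Since `d > 0`
on `Ω` and `log` is concave and increasing, `log ∘ d` is concave, i.e. `-log ∘ d` is convex.
-/

open Metric Real

section InfDistCompl

variable {E : Type*} [NormedAddCommGroup E] {s : Set E} {x : E}

theorem le_infDist_compl_of_ball_subset (hs : sᶜ.Nonempty) {r : ℝ} (h : ball x r ⊆ s) :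
    r ≤ infDist x sᶜ := by
  by_contra! hlt
  obtain ⟨y, hy, hxy⟩ := (infDist_lt_iff hs).1 hlt
  exact hy (h (mem_ball'.2 hxy))

theorem add_mem_of_norm_le_mul_infDist_compl (hx : x ∈ s) {θ : ℝ} (hθ : θ < 1) {v : E}
    (hv : ‖v‖ ≤ θ * infDist x sᶜ) : x + v ∈ s := by
  rcases (infDist_nonneg (x := x) (s := sᶜ)).eq_or_lt with hd | hd
  · rw [← hd, mul_zero, norm_le_zero_iff] at hv
    simpa [hv] using hx
  · apply ball_infDist_compl_subset
    rw [mem_ball, dist_self_add_left]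
    calc ‖v‖ ≤ θ * infDist x sᶜ := hv
      _ < infDist x sᶜ := by nlinarith

variable [NormedSpace ℝ E]

theorem Convex.ball_combo_infDist_compl_subset (hs : Convex ℝ s) (hx : x ∈ s) {y : E}
    (hy : y ∈ s) {a b : ℝ} (ha : 0 ≤ a) (hb : 0 ≤ b) (hab : a + b = 1) :
    ball (a • x + b • y) (a * infDist x sᶜ + b * infDist y sᶜ) ⊆ s := by
  set t := a * infDist x sᶜ + b * infDist y sᶜ
  intro w hw
  set v := w - (a • x + b • y)
  have hvt : ‖v‖ < t := by rwa [mem_ball, dist_eq_norm] at hw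
  have ht : 0 < t := (norm_nonneg v).trans_lt hvt
  have hθ : ‖v‖ / t < 1 := (div_lt_one ht).2 hvt
  -- Move both endpoints by `v`, scaled by their distance to `sᶜ`; the average moves by exactly `v`.
  have shift_mem : ∀ z ∈ s, z + (infDist z sᶜ / t) • v ∈ s := fun z hz =>
    add_mem_of_norm_le_mul_infDist_compl hz hθ <| by
      rw [norm_smul, norm_of_nonneg (div_nonneg infDist_nonneg ht.le)]
      exact le_of_eq (by ring)
  have hcombo : a • (x + (infDist x sᶜ / t) • v) + b • (y + (infDist y sᶜ / t) • v) = w := by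
    have hsum : a * (infDist x sᶜ / t) + b * (infDist y sᶜ / t) = 1 := by
      rw [mul_div_assoc', mul_div_assoc', ← add_div, div_self ht.ne']
    calc _ = (a • x + b • y) + (a * (infDist x sᶜ / t) + b * (infDist y sᶜ / t)) • v := by
          simp only [smul_add, smul_smul, add_smul]; abel
      _ = w := by rw [hsum, one_smul, add_sub_cancel]
  exact hcombo ▸ hs (shift_mem x hx) (shift_mem y hy) ha hb hab

theorem Convex.concaveOn_infDist_compl (hs : Convex ℝ s) :
    ConcaveOn ℝ s (fun x => infDist x sᶜ) := by
  refine ⟨hs, fun x hx y hy a b ha hb hab => ?_⟩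
  rcases sᶜ.eq_empty_or_nonempty with hempty | hne
  · simp [hempty]
  · exact le_infDist_compl_of_ball_subset hne (hs.ball_combo_infDist_compl_subset hx hy ha hb hab)

end InfDistCompl

theorem ConcaveOn.log {E : Type*} [AddCommGroup E] [Module ℝ E] {s : Set E} {f : E → ℝ}
    (hf : ConcaveOn ℝ s f) (hpos : ∀ x ∈ s, 0 < f x) : ConcaveOn ℝ s (fun x => log (f x)) :=
  ⟨hf.1, fun x hx y hy _ _ ha hb hab =>
    (strictConcaveOn_log_Ioi.concaveOn.2 (hpos x hx) (hpos y hy) ha hb hab).trans <|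
      log_le_log (convex_Ioi (0 : ℝ) (hpos x hx) (hpos y hy) ha hb hab) (hf.2 hx hy ha hb hab)⟩

/-- `x ↦ -log (dist (x, V \ Ω))` is convex on a proper open
convex subset `Ω` of a real normed vector space. -/
theorem convexOn_neg_log_dist_to_compl
    {V : Type*} [NormedAddCommGroup V] [NormedSpace ℝ V]
    (Ω : Set V) (hopen : IsOpen Ω) (hconv : Convex ℝ Ω) (hproper : Ω ≠ Set.univ) :
    ConvexOn ℝ Ω (fun x => -Real.log (Metric.infDist x Ωᶜ)) := by
  have hpos : ∀ x ∈ Ω, 0 < infDist x Ωᶜ := fun x hx =>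
    (hopen.isClosed_compl.notMem_iff_infDist_pos (Set.nonempty_compl.2 hproper)).1
      (not_not_intro hx)
  exact (hconv.concaveOn_infDist_compl.log hpos).neg
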